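/- Let k ≥ 1 and let A_0, …, A_{2k+1} be pairwise disjoint nonempty finite subsets of ℝ/ℤ. Define sign_{2k}(B_0,…,B_{2k}) := (Π_j |B_j|)^{-1} · Σ_{(b_0,…,b_{2k}) ∈ B_0×⋯×B_{2k}} sgn(b_0,…,b_{2k}) ∈ ℚ for pairwise disjoint nonempty finite subsets B_0,…,B_{2k}. Then Σ_{i=0}^{2k+1} (−1)^i · sign_{2k}(A_0, …, Â_i, …, A_{2k+1}) = 0. -/

import Mathlib

/-!
Write a tuple `b` of distinct points as `c ∘ π` with `c` in cyclic order. For an odd number of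
points two cyclic orderings differ by a rotation, an even permutation, so `cycSgn (c ∘ π) = sign π`.
Deleting the `i`-th entry of `b` leaves the face `c ∘ (π i).succAbove` reordered by a permutation
of sign `(-1)^i (-1)^(π i) sign π`, so for `2k+2` distinct points the alternating sum of the cyclic
signs of the faces is `sign π · ∑ᵢ (-1)^(π i) = 0`. Summing this over `A₀ × ⋯ × A_{2k+1}`, whose
tuples are injective by disjointness, gives the theorem, since each tuple of the `i`-th face
extends in `|Aᵢ|` ways.
-/

noncomputable section
open Classical

instance : Fact ((0:ℝ) < 1) := ⟨one_pos⟩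

/-- The circle `ℝ/ℤ`. -/
abbrev S1 := AddCircle (1 : ℝ)

/-- A tuple of points on the circle is in cyclic order if every increasing triple of
indices gives points in strict circular betweenness. -/
def InCyclicOrder {m : ℕ} (b : Fin m → S1) : Prop :=
  ∀ i j l : Fin m, i < j → j < l → sbtw (b i) (b j) (b l)

/-- The cyclic sign of a tuple of points on the circle: the sign of any permutation
rearranging the tuple into cyclic order (well defined for injective tuples of odd
length). -/
noncomputable def cycSgn {m : ℕ} (a : Fin m → S1) : ℤ :=
  if h : ∃ σ : Equiv.Perm (Fin m), InCyclicOrder (a ∘ σ) then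
    (Equiv.Perm.sign h.choose : ℤ)
  else 1

/-- The averaged sign `sign_{m-1}` of a tuple of pairwise disjoint nonempty finite
subsets of the circle. -/
noncomputable def avgSign {m : ℕ} (A : Fin m → Finset S1) : ℚ :=
  (∏ j : Fin m, ((A j).card : ℚ))⁻¹ *
    ∑ a ∈ Fintype.piFinset A, (cycSgn a : ℚ)

theorem QuotientAddGroup.sbtw_coe_of_lt {α : Type*} [AddCommGroup α] [LinearOrder α]
    [IsOrderedAddMonoid α] [Archimedean α] {p : α} [hp : Fact (0 < p)] {x y z : α}
    (hxy : x < y) (hyz : y < z) (hzx : z < x + p) :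
    sbtw (x : α ⧸ AddSubgroup.zmultiples p) y z := by
  refine sbtw_of_btw_not_btw ?_ ?_ <;> rw [QuotientAddGroup.btw_coe_iff]
  · rw [(toIcoMod_eq_self _).2 ⟨hxy.le, hyz.trans hzx⟩,
      (toIocMod_eq_self _).2 ⟨hxy.trans hyz, hzx.le⟩]
    exact hyz.le
  · rw [← toIcoMod_add_right, ← toIocMod_add_right hp.out z x,
      (toIcoMod_eq_self _).2 ⟨(hzx.trans (add_lt_add_left hxy p)).le, add_lt_add_left hyz p⟩,
      (toIocMod_eq_self _).2 ⟨hzx, add_le_add_left (hxy.trans hyz).le p⟩, not_le]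
    exact add_lt_add_left hxy p

theorem exists_inCyclicOrder {m : ℕ} {a : Fin m → S1} (ha : Function.Injective a) :
    ∃ σ : Equiv.Perm (Fin m), InCyclicOrder (a ∘ σ) := by
  let r : S1 → ℝ := fun x => AddCircle.equivIco 1 0 x
  have hr : Function.Injective r := fun x y h => (AddCircle.equivIco 1 0).injective (Subtype.ext h)
  have hcoe (x : S1) : ((r x : ℝ) : S1) = x := (AddCircle.equivIco 1 0).symm_apply_apply x
  let σ := Tuple.sort (r ∘ a)
  have hmono : StrictMono (r ∘ a ∘ σ) :=
    (Tuple.monotone_sort (r ∘ a)).strictMono_of_injective ((hr.comp ha).comp σ.injective)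
  refine ⟨σ, fun i j l hij hjl => ?_⟩
  have hl := (AddCircle.equivIco 1 0 (a (σ l))).2.2
  have hi := (AddCircle.equivIco 1 0 (a (σ i))).2.1
  rw [Function.comp_apply, Function.comp_apply, Function.comp_apply, ← hcoe (a (σ i)),
    ← hcoe (a (σ j)), ← hcoe (a (σ l))]
  exact QuotientAddGroup.sbtw_coe_of_lt (hmono hij) (hmono hjl) (by simp only [r] at *; linarith)

theorem InCyclicOrder.comp_finRotate {n : ℕ} {d : Fin (n + 1) → S1} (hd : InCyclicOrder d) :
    InCyclicOrder (d ∘ finRotate (n + 1)) := by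
  intro i j l hij hjl
  have hi : i ≠ Fin.last n := Fin.ne_last_of_lt (hij.trans hjl)
  have hj : j ≠ Fin.last n := Fin.ne_last_of_lt hjl
  have hshift {x y : Fin (n + 1)} (hx : x ≠ Fin.last n) (hy : y ≠ Fin.last n) (hxy : x < y) :
      finRotate (n + 1) x < finRotate (n + 1) y := by
    rw [Fin.lt_def, coe_finRotate_of_ne_last hx, coe_finRotate_of_ne_last hy]
    exact Nat.succ_lt_succ hxy
  simp only [Function.comp_apply]
  by_cases hl : l = Fin.last n
  · subst hl
    have h0 : 0 < finRotate (n + 1) i := by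
      rw [Fin.lt_def, coe_finRotate_of_ne_last hi]
      exact Nat.succ_pos _
    rw [finRotate_last]
    exact sbtw_cyclic_left (hd 0 _ _ h0 (hshift hi hj hij))
  · exact hd _ _ _ (hshift hi hj hij) (hshift hj hl hjl)

theorem InCyclicOrder.comp_finRotate_pow {n : ℕ} {d : Fin (n + 1) → S1} (hd : InCyclicOrder d)
    (s : ℕ) : InCyclicOrder (d ∘ ⇑(finRotate (n + 1) ^ s)) := by
  induction s with
  | zero => simpa using hd
  | succ s ih => simpa [pow_succ, Function.comp_assoc] using ih.comp_finRotate

theorem InCyclicOrder.eq_one_of_comp_of_apply_zero {n : ℕ} {c : Fin (n + 1) → S1}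
    (hc : InCyclicOrder c) {ψ : Equiv.Perm (Fin (n + 1))} (hψ : InCyclicOrder (c ∘ ψ))
    (hψ0 : ψ 0 = 0) : ψ = 1 := by
  have hpos (x : Fin (n + 1)) : 0 < ψ x ↔ 0 < x := by
    rw [Fin.pos_iff_ne_zero, Fin.pos_iff_ne_zero, Ne, Ne, ψ.injective.eq_iff' hψ0]
  have hmono : StrictMono ψ := by
    intro i j hij
    refine lt_of_not_ge fun hji => ?_
    rcases (Fin.zero_le i).eq_or_lt with rfl | hi
    · exact ((hpos j).2 hij).not_ge (hψ0 ▸ hji)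
    · have h1 := hψ 0 i j hi hij
      simp only [Function.comp_apply, hψ0] at h1
      exact sbtw_asymm h1
        (hc 0 _ _ ((hpos j).2 (hi.trans hij)) (hji.lt_of_ne (ψ.injective.ne hij.ne'))).cyclic_left
  exact Equiv.ext (congrFun ((hmono.range_inj strictMono_id).1 (by simp)))

theorem InCyclicOrder.sign_eq_one {n : ℕ} (hn : Even n) {c : Fin (n + 1) → S1}
    (hc : InCyclicOrder c) {π : Equiv.Perm (Fin (n + 1))} (hπ : InCyclicOrder (c ∘ π)) :
    Equiv.Perm.sign π = 1 := by
  set t := π⁻¹ 0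
  have hψ : π * finRotate (n + 1) ^ t.val = 1 := by
    refine hc.eq_one_of_comp_of_apply_zero ?_ ?_
    · simpa [Function.comp_assoc] using hπ.comp_finRotate_pow t
    · rw [Equiv.Perm.mul_apply, Equiv.Perm.coe_pow, ← finCycle_eq_finRotate_iterate,
        finCycle_apply, zero_add]
      exact π.apply_symm_apply 0
  rw [mul_eq_one_iff_eq_inv.1 hψ, map_inv, map_pow, sign_finRotate, Nat.add_sub_cancel,
    hn.neg_one_pow, one_pow, inv_one]

theorem InCyclicOrder.cycSgn_comp {n : ℕ} (hn : Even n) {c : Fin (n + 1) → S1}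
    (hc : InCyclicOrder c) (π : Equiv.Perm (Fin (n + 1))) :
    cycSgn (c ∘ π) = Equiv.Perm.sign π := by
  have h : ∃ σ : Equiv.Perm (Fin (n + 1)), InCyclicOrder ((c ∘ π) ∘ σ) :=
    ⟨π⁻¹, by simpa [Function.comp_assoc] using hc⟩
  rw [cycSgn, dif_pos h]
  have := hc.sign_eq_one hn (π := π * h.choose) h.choose_spec
  rw [map_mul, mul_eq_one_iff_eq_inv', Int.units_inv_eq_self] at this
  rw [this]

theorem Equiv.Perm.exists_succAbove_comp {n : ℕ} (π : Perm (Fin (n + 1))) (i : Fin (n + 1)) :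
    ∃ ρ : Perm (Fin n), (∀ j, π (i.succAbove j) = (π i).succAbove (ρ j)) ∧
      sign ρ = (-1) ^ (i : ℕ) * (-1) ^ (π i : ℕ) * sign π := by
  -- conjugating by cycle ranges turns `π` into a permutation fixing `0`
  obtain ⟨⟨p, ρ⟩, hμ⟩ := decomposeFin.symm.surjective ((π i).cycleRange * π * i.cycleRange⁻¹)
  have hp : p = 0 := by
    rw [← decomposeFin_symm_apply_zero p ρ, hμ, mul_apply, mul_apply, inv_def,
      Fin.cycleRange_symm_zero, Fin.cycleRange_self]
  subst hp
  refine ⟨ρ, fun j => (π i).cycleRange.injective ?_, ?_⟩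
  · have := congrArg (· j.succ) hμ
    simp only [decomposeFin_symm_apply_succ, swap_self, refl_apply, mul_apply, inv_def,
      Fin.cycleRange_symm_succ] at this
    rw [Fin.cycleRange_succAbove, this]
  · have := congrArg sign hμ
    rw [decomposeFin.symm_sign, if_pos rfl, one_mul, map_mul, map_mul, map_inv,
      Fin.sign_cycleRange, Fin.sign_cycleRange, Int.units_inv_eq_self] at this
    rw [this, mul_right_comm, mul_comm ((-1) ^ (i : ℕ))]

theorem InCyclicOrder.comp_succAbove {n : ℕ} {c : Fin (n + 1) → S1} (hc : InCyclicOrder c)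
    (i : Fin (n + 1)) : InCyclicOrder (c ∘ i.succAbove) := fun _ _ _ hxy hyz =>
  hc _ _ _ (Fin.succAbove_lt_succAbove_iff.mpr hxy) (Fin.succAbove_lt_succAbove_iff.mpr hyz)

theorem InCyclicOrder.cycSgn_comp_succAbove {m : ℕ} (hm : Even m) {c : Fin (m + 2) → S1}
    (hc : InCyclicOrder c) (π : Equiv.Perm (Fin (m + 2))) (i : Fin (m + 2)) :
    cycSgn (c ∘ π ∘ i.succAbove) = (-1) ^ (i : ℕ) * (-1) ^ (π i : ℕ) * Equiv.Perm.sign π := by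
  obtain ⟨ρ, hρ, hsign⟩ := π.exists_succAbove_comp i
  have hface : c ∘ π ∘ i.succAbove = (c ∘ (π i).succAbove) ∘ ρ := funext fun j => by simp [hρ]
  rw [hface, (hc.comp_succAbove _).cycSgn_comp hm, hsign]
  push_cast
  rfl

theorem sum_neg_one_pow_mul_cycSgn_comp_succAbove {m : ℕ} (hm : Even m) {b : Fin (m + 2) → S1}
    (hb : Function.Injective b) :
    ∑ i : Fin (m + 2), (-1 : ℚ) ^ (i : ℕ) * cycSgn (b ∘ i.succAbove) = 0 := by
  obtain ⟨σ, hσ⟩ := exists_inCyclicOrder hb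
  have hbσ : b = (b ∘ σ) ∘ ⇑σ⁻¹ := by simp [Function.comp_assoc]
  have hsq (i : ℕ) : (-1 : ℚ) ^ i * (-1) ^ i = 1 := by rw [← mul_pow, neg_one_mul, neg_neg, one_pow]
  calc ∑ i : Fin (m + 2), (-1 : ℚ) ^ (i : ℕ) * cycSgn (b ∘ i.succAbove)
      = Equiv.Perm.sign σ⁻¹ * ∑ i : Fin (m + 2), (-1 : ℚ) ^ (σ⁻¹ i : ℕ) := by
        rw [Finset.mul_sum]
        refine Finset.sum_congr rfl fun i _ => ?_
        rw [hbσ, Function.comp_assoc, hσ.cycSgn_comp_succAbove hm]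
        push_cast
        rw [← mul_assoc, ← mul_assoc, hsq, one_mul, mul_comm]
    _ = Equiv.Perm.sign σ⁻¹ * ∑ i : Fin (m + 2), (-1 : ℚ) ^ (i : ℕ) := by
        rw [Equiv.sum_comp σ⁻¹ fun i : Fin (m + 2) => (-1 : ℚ) ^ (i : ℕ)]
    _ = 0 := by
        rw [Fin.sum_univ_eq_sum_range (fun i => (-1 : ℚ) ^ i), neg_one_geom_sum,
          if_pos (hm.add even_two), mul_zero]

theorem Finset.sum_piFinset_comp_succAbove {α β : Type*} [AddCommMonoid β] {n : ℕ}
    (S : Fin (n + 1) → Finset α) (p : Fin (n + 1)) (f : (Fin n → α) → β) :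
    ∑ b ∈ Fintype.piFinset S, f (b ∘ p.succAbove) =
      (S p).card • ∑ a ∈ Fintype.piFinset (S ∘ p.succAbove), f a := by
  have h := Finset.map_insertNthEquiv_filter_piFinset S (p := p) fun _ => True
  rw [Finset.filter_true_of_mem (fun _ _ => trivial),
    Finset.filter_true_of_mem (fun _ _ => trivial)] at h
  rw [← Finset.sum_const, ← Finset.sum_product', show S ∘ p.succAbove = p.removeNth S from rfl,
    ← h, Finset.sum_map]
  rfl

theorem Fintype.injective_of_mem_piFinset {ι α : Type*} [Fintype ι] [DecidableEq ι]
    {S : ι → Finset α} (hS : Pairwise fun i j => Disjoint (S i) (S j)) {b : ι → α}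
    (hb : b ∈ Fintype.piFinset S) : Function.Injective b := by
  intro i j hij
  by_contra hne
  rw [Fintype.mem_piFinset] at hb
  exact Finset.disjoint_left.mp (hS hne) (hb i) (hij ▸ hb j)

theorem avgSign_comp_succAbove {n : ℕ} {A : Fin (n + 1) → Finset S1} {i : Fin (n + 1)}
    (hi : (A i).Nonempty) :
    avgSign (A ∘ i.succAbove) =
      (∏ j, ((A j).card : ℚ))⁻¹ * ∑ b ∈ Fintype.piFinset A, (cycSgn (b ∘ i.succAbove) : ℚ) := by
  have hcard : ((A i).card : ℚ) ≠ 0 := Nat.cast_ne_zero.2 hi.card_pos.ne'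
  rw [avgSign, Finset.sum_piFinset_comp_succAbove A i fun a => (cycSgn a : ℚ), nsmul_eq_mul,
    Fin.prod_univ_succAbove (fun j => ((A j).card : ℚ)) i, mul_inv, mul_mul_mul_comm,
    inv_mul_cancel₀ hcard, one_mul]
  rfl

theorem stmt5_general (k : ℕ) (A : Fin (2 * k + 2) → Finset S1)
    (hne : ∀ i, (A i).Nonempty)
    (hdisj : ∀ i j, i ≠ j → Disjoint (A i) (A j)) :
    ∑ i : Fin (2 * k + 2), (-1 : ℚ) ^ (i : ℕ) * avgSign (A ∘ i.succAbove) = 0 := by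
  simp_rw [avgSign_comp_succAbove (hne _), mul_left_comm _ (_⁻¹), Finset.mul_sum]
  rw [Finset.sum_comm]
  refine Finset.sum_eq_zero fun b hb => ?_
  rw [← Finset.mul_sum, sum_neg_one_pow_mul_cycSgn_comp_succAbove (even_two_mul k)
    (Fintype.injective_of_mem_piFinset hdisj hb), mul_zero]

/-- The averaged sign is a simplicial cocycle: the alternating sum of `sign_{2k}`
over the `2k+2` faces of a tuple of pairwise disjoint nonempty finite subsets of the
circle vanishes. -/
theorem stmt5 (k : ℕ) (hk : 1 ≤ k) (A : Fin (2 * k + 2) → Finset S1)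
    (hne : ∀ i, (A i).Nonempty)
    (hdisj : ∀ i j, i ≠ j → Disjoint (A i) (A j)) :
    ∑ i : Fin (2 * k + 2), (-1 : ℚ) ^ (i : ℕ) * avgSign (A ∘ i.succAbove) = 0 :=
  stmt5_general k A hne hdisj
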